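/- Consider a sequence p¹, p², … in ℝ^m with p¹ = 0 and satisfying, for each t, ‖p^{t+1}‖₂² ≤ ‖p^t‖₂² + (η^t)²·m·d_y² + 2η^t(d_r − d·‖p^t‖₂) and ‖p^{t+1}‖₂ ≤ ‖p^t‖₂ + η^t·√m·d_y, where d_y, d_r ≥ 0, d > 0, and 0 ≤ η^t ≤ 1/m for all t. Then for every t, ‖p^t‖₂ ≤ (d_y² + 2d_r)/(2d) + d_y/√m. -/
import Mathlib


/-- Boundedness of the dual multipliers: if `p¹ = 0` and the norms satisfy the two
recursions with stepsizes `0 ≤ η^t ≤ 1/m`, then `‖p^t‖ ≤ (d_y² + 2d_r)/(2d) + d_y/√m`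
for every `t ≥ 1`. -/
theorem stmt_4 (m : ℕ) (hm : 1 ≤ m) (p : ℕ → EuclideanSpace ℝ (Fin m))
    (η : ℕ → ℝ) (dy dr d : ℝ) (hdy : 0 ≤ dy) (hdr : 0 ≤ dr) (hd : 0 < d)
    (hη : ∀ t, 1 ≤ t → 0 ≤ η t ∧ η t ≤ 1 / (m : ℝ))
    (hp1 : p 1 = 0)
    (hrec1 : ∀ t, 1 ≤ t →
      ‖p (t + 1)‖ ^ 2 ≤ ‖p t‖ ^ 2 + (η t) ^ 2 * (m : ℝ) * dy ^ 2
        + 2 * η t * (dr - d * ‖p t‖))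
    (hrec2 : ∀ t, 1 ≤ t → ‖p (t + 1)‖ ≤ ‖p t‖ + η t * Real.sqrt (m : ℝ) * dy) :
    ∀ t, 1 ≤ t → ‖p t‖ ≤ (dy ^ 2 + 2 * dr) / (2 * d) + dy / Real.sqrt (m : ℝ) := by
  have hm' : (0 : ℝ) < m := by exact_mod_cast hm
  have hs : 0 < Real.sqrt m := Real.sqrt_pos.mpr hm'
  have hsm : Real.sqrt m * Real.sqrt m = (m : ℝ) := Real.mul_self_sqrt hm'.le
  intro t
  induction t with
  | zero => omega
  | succ n ih =>
    intro _
    rcases Nat.eq_zero_or_pos n with rfl | hn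
    · simp [hp1]
      positivity
    have hbn := ih hn
    obtain ⟨hη0, hη1⟩ := hη n hn
    rcases le_or_gt ((dy ^ 2 + 2 * dr) / (2 * d)) ‖p n‖ with hc | hc
    · -- norm decreases
      have h1 := hrec1 n hn
      have hdB : dy ^ 2 + 2 * dr ≤ 2 * d * ‖p n‖ := by
        rw [div_le_iff₀ (by positivity)] at hc; linarith
      have hη2 : η n ^ 2 * (m : ℝ) ≤ η n := by
        have : η n * (m : ℝ) ≤ 1 := by
          rw [le_div_iff₀ hm'] at hη1; linarith
        nlinarith
      have hsq : ‖p (n + 1)‖ ^ 2 ≤ ‖p n‖ ^ 2 := by nlinarith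
      have hle : ‖p (n + 1)‖ ≤ ‖p n‖ := by
        have h2 := Real.sqrt_le_sqrt hsq
        rwa [Real.sqrt_sq (norm_nonneg _), Real.sqrt_sq (norm_nonneg _)] at h2
      linarith
    · have h2 := hrec2 n hn
      have hstep : η n * Real.sqrt m * dy ≤ dy / Real.sqrt m := by
        rw [div_eq_mul_inv, ← Real.sqrt_inv]
        have h3 : η n * Real.sqrt m ≤ Real.sqrt (m : ℝ)⁻¹ := by
          have : Real.sqrt (m : ℝ)⁻¹ * Real.sqrt m = 1 := by
            rw [← Real.sqrt_mul (by positivity), inv_mul_cancel₀ hm'.ne',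
              Real.sqrt_one]
          nlinarith [Real.sqrt_nonneg (m : ℝ)⁻¹, hη1, hs,
            (le_div_iff₀ hm').mp hη1]
        calc η n * Real.sqrt m * dy ≤ Real.sqrt (m : ℝ)⁻¹ * dy :=
              mul_le_mul_of_nonneg_right h3 hdy
          _ = dy * Real.sqrt (m : ℝ)⁻¹ := mul_comm _ _
      linarith
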